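/- Let r ≥ 2 be even and γ, ψ ≥ 0. Define R_r(γ, ψ) = ∑_{k=1}^{r/2} S(r,k) γ^{2k} ψ^{r−2k}. Then R_r(γ, ψ)^{1/r} ≤ (max(2r / (1 + 2(log(ψ/γ))₊), 2)) · max(γ, ψ), where (x)₊ = max(x, 0). -/

import Mathlib

/-- Stirling numbers of the second kind. -/
def stirling : ℕ → ℕ → ℕ
  | 0, 0 => 1
  | 0, _ + 1 => 0
  | _ + 1, 0 => 0
  | n + 1, k + 1 => (k + 1) * stirling n (k + 1) + stirling n k


lemma stirling_le_aux (n : ℕ) : ∀ k, stirling n k ≤ n.choose k * k ^ (n - k) := by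
  induction n with
  | zero => intro k; match k with
    | 0 => simp [stirling]
    | k+1 => simp [stirling]
  | succ n ih =>
    intro k
    match k with
    | 0 => simp [stirling]
    | k+1 =>
      rw [stirling, Nat.choose_succ_succ]
      have h1 : (k + 1) * stirling n (k + 1) ≤ n.choose (k+1) * (k+1) ^ (n + 1 - (k+1)) := by
        rcases le_or_gt (k+1) n with h | h
        · have e : n + 1 - (k+1) = (n - (k+1)) + 1 := by omega
          rw [e, pow_succ]
          calc (k+1) * stirling n (k+1)
              ≤ (k+1) * (n.choose (k+1) * (k+1) ^ (n - (k+1))) :=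
                Nat.mul_le_mul_left _ (ih (k+1))
            _ = n.choose (k+1) * ((k+1) ^ (n-(k+1)) * (k+1)) := by ring
        · have hz : stirling n (k+1) = 0 := by
            have := ih (k+1)
            simpa [Nat.choose_eq_zero_of_lt h] using this
          simp [hz]
      have h2 : stirling n k ≤ n.choose k * (k+1) ^ (n + 1 - (k+1)) := by
        calc stirling n k ≤ n.choose k * k ^ (n - k) := ih k
          _ ≤ n.choose k * (k+1) ^ (n + 1 - (k+1)) := by
            apply Nat.mul_le_mul_left
            have e : n + 1 - (k+1) = n - k := by omega
            rw [e]
            exact Nat.pow_le_pow_left (by omega) _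
      calc (k+1) * stirling n (k+1) + stirling n k
          ≤ n.choose (k+1) * (k+1) ^ (n+1-(k+1)) + n.choose k * (k+1) ^ (n+1-(k+1)) :=
            Nat.add_le_add h1 h2
        _ = (n.choose k + n.choose (k+1)) * (k+1) ^ (n+1-(k+1)) := by ring

lemma stirling_le (n k : ℕ) : (stirling n k : ℝ) ≤ 2 ^ n * (k : ℝ) ^ (n - k) := by
  have h1 := stirling_le_aux n k
  have h2 : (n.choose k : ℕ) ≤ 2 ^ n := by
    rcases le_or_gt k n with h | h
    · calc n.choose k ≤ ∑ m ∈ Finset.range (n+1), n.choose m :=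
          Finset.single_le_sum (fun i _ => Nat.zero_le _) (Finset.mem_range.mpr (by omega))
      _ = 2 ^ n := Nat.sum_range_choose n
    · simp [Nat.choose_eq_zero_of_lt h]
  have h3 : stirling n k ≤ 2 ^ n * k ^ (n - k) :=
    h1.trans (Nat.mul_le_mul_right _ h2)
  exact_mod_cast h3

lemma lemA {x : ℝ} : x * Real.exp (-x) ≤ Real.exp (-1) := by
  have h := Real.add_one_le_exp (x - 1)
  have hx : x ≤ Real.exp (x - 1) := by linarith
  calc x * Real.exp (-x) ≤ Real.exp (x - 1) * Real.exp (-x) :=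
        mul_le_mul_of_nonneg_right hx (Real.exp_pos _).le
    _ = Real.exp (-1) := by rw [← Real.exp_add]; ring_nf

lemma lemB (r k : ℕ) (hk : 1 ≤ k) (hr : 1 ≤ r) {t : ℝ} (ht : 0 ≤ t) :
    t ^ r * Real.exp (-(k : ℝ) * t) ≤ ((r : ℝ) / k) ^ r * Real.exp (-(r : ℝ)) := by
  have hkpos : (0 : ℝ) < k := by exact_mod_cast hk
  have hrpos : (0 : ℝ) < r := by exact_mod_cast hr
  have key : t * Real.exp (-(k : ℝ) * t / r) ≤ (r : ℝ) / k * Real.exp (-1) := by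
    have h2 : (k : ℝ) * t / r * Real.exp (-((k : ℝ) * t / r)) ≤ Real.exp (-1) :=
      lemA (x := (k : ℝ) * t / r)
    have h3 := mul_le_mul_of_nonneg_left h2 (le_of_lt (div_pos hrpos hkpos))
    calc t * Real.exp (-(k:ℝ) * t / r)
        = (r : ℝ) / k * ((k : ℝ) * t / r * Real.exp (-((k : ℝ) * t / r))) := by
          field_simp
      _ ≤ (r : ℝ) / k * Real.exp (-1) := h3
  have hL : 0 ≤ t * Real.exp (-(k : ℝ) * t / r) :=
    mul_nonneg ht (Real.exp_pos _).le
  have hpow := pow_le_pow_left₀ hL key r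
  calc t ^ r * Real.exp (-(k : ℝ) * t)
      = (t * Real.exp (-(k : ℝ) * t / r)) ^ r := by
        rw [mul_pow, ← Real.exp_nat_mul]
        congr 1
        field_simp
    _ ≤ ((r : ℝ) / k * Real.exp (-1)) ^ r := hpow
    _ = ((r : ℝ) / k) ^ r * Real.exp (-(r : ℝ)) := by
        rw [mul_pow, ← Real.exp_nat_mul]
        congr 2
        ring

/-- case `1 ≤ t ≤ r` of the key lemma -/
lemma keylem_aux (r k : ℕ) (hk : 1 ≤ k) (hkr : 2 * k ≤ r) {t : ℝ} (ht : 1 ≤ t)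
    (htr : t ≤ r) :
    (2 : ℝ) ^ k * (k : ℝ) ^ (r - k) * Real.exp (k * (1 - t)) ≤ ((r : ℝ) / t) ^ r := by
  have hkpos : (0 : ℝ) < k := by exact_mod_cast hk
  have hk1 : (1 : ℝ) ≤ k := by exact_mod_cast hk
  have hr1 : 1 ≤ r := by omega
  have hrpos : (0 : ℝ) < r := by exact_mod_cast hr1
  have htpos : (0 : ℝ) < t := lt_of_lt_of_le one_pos ht
  rw [div_pow, le_div_iff₀ (by positivity)]
  have hexp : Real.exp ((k : ℝ) * (1 - t)) = Real.exp k * Real.exp (-(k : ℝ) * t) := by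
    rw [← Real.exp_add]; ring_nf
  have hB := lemB r k hk hr1 htpos.le
  have h2e : (2 : ℝ) ^ k * Real.exp k ≤ Real.exp r := by
    have h2 : (2 : ℝ) ≤ Real.exp 1 := by
      have := Real.add_one_le_exp (1 : ℝ); linarith
    calc (2 : ℝ) ^ k * Real.exp k ≤ Real.exp 1 ^ k * Real.exp k := by
          gcongr
      _ = Real.exp ((2 * k : ℕ) : ℝ) := by
          rw [← Real.exp_nat_mul, ← Real.exp_add]
          congr 1
          push_cast
          ring
      _ ≤ Real.exp r := by
          apply Real.exp_le_exp.mpr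
          exact_mod_cast hkr
  calc (2 : ℝ) ^ k * (k : ℝ) ^ (r - k) * Real.exp ((k : ℝ) * (1 - t)) * t ^ r
      = ((2 : ℝ) ^ k * Real.exp k) * ((k : ℝ) ^ (r - k) * (t ^ r * Real.exp (-(k : ℝ) * t))) := by
        rw [hexp]; ring
    _ ≤ Real.exp r * ((k : ℝ) ^ (r - k) * (((r : ℝ) / k) ^ r * Real.exp (-(r : ℝ)))) := by
        apply mul_le_mul h2e
          (mul_le_mul_of_nonneg_left hB (by positivity)) (by positivity) (by positivity)
    _ = ((k : ℝ) ^ (r - k) * ((r : ℝ) ^ r / (k : ℝ) ^ r)) * (Real.exp r * Real.exp (-(r : ℝ))) := by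
        rw [div_pow]; ring
    _ = (k : ℝ) ^ (r - k) * ((r : ℝ) ^ r / (k : ℝ) ^ r) := by
        rw [← Real.exp_add]; simp
    _ ≤ (k : ℝ) ^ r * ((r : ℝ) ^ r / (k : ℝ) ^ r) := by
        apply mul_le_mul_of_nonneg_right (pow_le_pow_right₀ hk1 (Nat.sub_le r k))
        positivity
    _ = (r : ℝ) ^ r := by field_simp

lemma keylem (r k : ℕ) (hk : 1 ≤ k) (hkr : 2 * k ≤ r) {t : ℝ} (ht : 1 ≤ t) :
    (2 : ℝ) ^ k * (k : ℝ) ^ (r - k) * Real.exp (k * (1 - t)) ≤ (max ((r : ℝ) / t) 1) ^ r := by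
  have hr1 : 1 ≤ r := by omega
  have hrpos : (0 : ℝ) < r := by exact_mod_cast hr1
  have htpos : (0 : ℝ) < t := lt_of_lt_of_le one_pos ht
  rcases le_or_gt t r with h | h
  · have hmax : max ((r : ℝ) / t) 1 = (r : ℝ) / t :=
      max_eq_left ((one_le_div htpos).mpr h)
    rw [hmax]
    exact keylem_aux r k hk hkr ht h
  · have hmax : max ((r : ℝ) / t) 1 = 1 :=
      max_eq_right (le_of_lt ((div_lt_one htpos).mpr h))
    rw [hmax, one_pow]
    have hkpos : (0 : ℝ) ≤ k := by positivity
    have hstep : Real.exp ((k : ℝ) * (1 - t)) ≤ Real.exp ((k : ℝ) * (1 - r)) :=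
      Real.exp_le_exp.mpr (mul_le_mul_of_nonneg_left (by linarith) hkpos)
    have haux := keylem_aux r k hk hkr (by exact_mod_cast hr1) (le_refl (r : ℝ))
    rw [div_self hrpos.ne', one_pow] at haux
    calc (2 : ℝ) ^ k * (k : ℝ) ^ (r - k) * Real.exp ((k:ℝ) * (1 - t))
        ≤ (2 : ℝ) ^ k * (k : ℝ) ^ (r - k) * Real.exp ((k:ℝ) * (1 - (r:ℝ))) := by
          apply mul_le_mul_of_nonneg_left hstep
          positivity
      _ ≤ 1 := haux

lemma pointwise_pow (r k : ℕ) (hk : 1 ≤ k) (hkr : 2 * k ≤ r) {γ ψ : ℝ} (hγ : 0 < γ)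
    (hψ : 0 ≤ ψ) :
    γ ^ (2 * k) * ψ ^ (r - 2 * k)
      ≤ (max γ ψ) ^ r * Real.exp ((k : ℝ) * (1 - (1 + 2 * max (Real.log (ψ / γ)) 0))) := by
  rcases le_or_gt ψ γ with h | h
  · have hlog : Real.log (ψ / γ) ≤ 0 :=
      Real.log_nonpos (by positivity) ((div_le_one hγ).mpr h)
    have hmax0 : max (Real.log (ψ / γ)) 0 = 0 := max_eq_right hlog
    have hmaxγ : max γ ψ = γ := max_eq_left h
    rw [hmax0, hmaxγ]
    norm_num
    calc γ ^ (2 * k) * ψ ^ (r - 2 * k) ≤ γ ^ (2 * k) * γ ^ (r - 2 * k) := by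
          gcongr
      _ = γ ^ r := by rw [← pow_add]; congr 1; omega
  · have hψpos : 0 < ψ := lt_of_le_of_lt hγ.le h
    have hdiv : 1 < ψ / γ := (one_lt_div hγ).mpr h
    have hlog : 0 ≤ Real.log (ψ / γ) := Real.log_nonneg hdiv.le
    have hmaxL : max (Real.log (ψ / γ)) 0 = Real.log (ψ / γ) := max_eq_left hlog
    have hmaxψ : max γ ψ = ψ := max_eq_right h.le
    rw [hmaxL, hmaxψ]
    set L := Real.log (ψ / γ) with hL
    have hexpL : Real.exp L = ψ / γ := Real.exp_log (by positivity)
    have hγeq : γ = ψ * Real.exp (-L) := by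
      rw [Real.exp_neg, hexpL]
      field_simp
    have harg : (k : ℝ) * (1 - (1 + 2 * L)) = ((2 * k : ℕ) : ℝ) * (-L) := by
      push_cast; ring
    rw [harg]
    have heq : γ ^ (2 * k) * ψ ^ (r - 2 * k) = ψ ^ r * Real.exp (((2 * k : ℕ) : ℝ) * (-L)) := by
      rw [hγeq, mul_pow, ← Real.exp_nat_mul]
      rw [mul_comm (ψ ^ (2*k)) _, mul_assoc, ← pow_add]
      have e : 2 * k + (r - 2 * k) = r := by omega
      rw [e]
      ring
    rw [heq]

lemma geom_le_one (m : ℕ) : (∑ k ∈ Finset.Icc 1 m, ((1:ℝ)/2) ^ k) ≤ 1 := by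
  have key : ∀ m : ℕ, (∑ k ∈ Finset.Icc 1 m, ((1:ℝ)/2) ^ k) = 1 - (1/2) ^ m := by
    intro m
    induction m with
    | zero => simp
    | succ m ihm =>
      rw [Finset.sum_Icc_succ_top (by omega), ihm]
      ring
  rw [key m]
  have : (0:ℝ) ≤ (1/2) ^ m := by positivity
  linarith

/-- For even `r ≥ 2` and `γ, ψ ≥ 0`, with `R_r(γ,ψ) = ∑_{k=1}^{r/2} S(r,k) γ^{2k} ψ^{r−2k}`,
we have `R_r(γ,ψ)^{1/r} ≤ max (2r / (1 + 2 (log(ψ/γ))₊)) 2 * max γ ψ`. -/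
theorem stmt_9 (r : ℕ) (hr : Even r) (hr2 : 2 ≤ r) (γ ψ : ℝ) (hγ : 0 ≤ γ) (hψ : 0 ≤ ψ) :
    (∑ k ∈ Finset.Icc 1 (r / 2), (stirling r k : ℝ) * γ ^ (2 * k) * ψ ^ (r - 2 * k))
        ^ ((1 : ℝ) / r)
      ≤ max ((2 * r : ℝ) / (1 + 2 * max (Real.log (ψ / γ)) 0)) 2 * max γ ψ := by
  have hr0 : (r : ℝ) ≠ 0 := by positivity
  set L := max (Real.log (ψ / γ)) 0 with hLdef
  have hL0 : 0 ≤ L := le_max_right _ _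
  set t : ℝ := 1 + 2 * L with htdef
  have ht1 : (1 : ℝ) ≤ t := by rw [htdef]; linarith
  have htpos : (0 : ℝ) < t := lt_of_lt_of_le one_pos ht1
  set D : ℝ := max ((r : ℝ) / t) 1 with hDdef
  have hD1 : (1 : ℝ) ≤ D := le_max_right _ _
  have hD0 : (0 : ℝ) ≤ D := by linarith
  have hCeq : max ((2 * r : ℝ) / t) 2 = 2 * D := by
    rw [hDdef, mul_max_of_nonneg _ _ (by norm_num : (0:ℝ) ≤ 2)]
    congr 1
    · rw [mul_div_assoc]
    · norm_num
  rw [hCeq]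
  set M : ℝ := max γ ψ with hMdef
  have hM0 : 0 ≤ M := le_trans hγ (le_max_left _ _)
  have hsum : (∑ k ∈ Finset.Icc 1 (r / 2), (stirling r k : ℝ) * γ ^ (2 * k) * ψ ^ (r - 2 * k))
      ≤ (2 * D * M) ^ r := by
    rcases eq_or_lt_of_le hγ with hγ0 | hγpos
    · have hz : ∀ k ∈ Finset.Icc 1 (r / 2),
          (stirling r k : ℝ) * γ ^ (2 * k) * ψ ^ (r - 2 * k) = 0 := by
        intro k hk
        rw [Finset.mem_Icc] at hk
        have : γ ^ (2 * k) = 0 := by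
          rw [← hγ0]
          exact zero_pow (by omega)
        rw [this]; ring
      rw [Finset.sum_congr rfl hz, Finset.sum_const, smul_zero]
      positivity
    · calc (∑ k ∈ Finset.Icc 1 (r / 2), (stirling r k : ℝ) * γ ^ (2 * k) * ψ ^ (r - 2 * k))
          ≤ ∑ k ∈ Finset.Icc 1 (r / 2), (2:ℝ) ^ r * (1/2) ^ k * (D ^ r * M ^ r) := by
            apply Finset.sum_le_sum
            intro k hk
            rw [Finset.mem_Icc] at hk
            have hk1 : 1 ≤ k := hk.1
            have hkr : 2 * k ≤ r := by omega
            have hS := stirling_le r k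
            have hP := pointwise_pow r k hk1 hkr hγpos hψ
            have hterm : (stirling r k : ℝ) * γ ^ (2 * k) * ψ ^ (r - 2 * k)
                ≤ (2 ^ r * (k:ℝ) ^ (r - k)) * (M ^ r * Real.exp ((k:ℝ) * (1 - t))) := by
              have hpow0 : (0:ℝ) ≤ γ ^ (2*k) * ψ ^ (r - 2*k) := by positivity
              calc (stirling r k : ℝ) * γ ^ (2 * k) * ψ ^ (r - 2 * k)
                  = (stirling r k : ℝ) * (γ ^ (2 * k) * ψ ^ (r - 2 * k)) := by ring
                _ ≤ (2 ^ r * (k:ℝ) ^ (r - k)) * (M ^ r * Real.exp ((k:ℝ) * (1 - t))) :=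
                    mul_le_mul hS hP hpow0 (by positivity)
            have hkey := keylem r k hk1 hkr ht1
            calc (stirling r k : ℝ) * γ ^ (2 * k) * ψ ^ (r - 2 * k)
                ≤ (2 ^ r * (k:ℝ) ^ (r - k)) * (M ^ r * Real.exp ((k:ℝ) * (1 - t))) := hterm
              _ = (2:ℝ) ^ r * (1/2) ^ k * ((2:ℝ)^k * (k:ℝ)^(r-k) * Real.exp ((k:ℝ)*(1-t))) * M ^ r := by
                  have h2k : ((1:ℝ)/2) ^ k * (2:ℝ) ^ k = 1 := by
                    rw [← mul_pow]
                    norm_num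
                  field_simp
                  linear_combination (-M ^ r) * h2k
              _ ≤ (2:ℝ) ^ r * (1/2) ^ k * (D ^ r) * M ^ r := by
                  apply mul_le_mul_of_nonneg_right _ (pow_nonneg hM0 r)
                  apply mul_le_mul_of_nonneg_left hkey
                  positivity
              _ = (2:ℝ) ^ r * (1/2) ^ k * (D ^ r * M ^ r) := by ring
        _ = (2:ℝ) ^ r * (D ^ r * M ^ r) * (∑ k ∈ Finset.Icc 1 (r / 2), ((1:ℝ)/2) ^ k) := by
            rw [Finset.mul_sum]
            apply Finset.sum_congr rfl
            intro k _
            ring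
        _ ≤ (2:ℝ) ^ r * (D ^ r * M ^ r) * 1 := by
            apply mul_le_mul_of_nonneg_left (geom_le_one (r/2))
            positivity
        _ = (2 * D * M) ^ r := by rw [mul_pow, mul_pow]; ring
  have hRHS0 : (0:ℝ) ≤ 2 * D * M := by positivity
  have hsum0 : (0:ℝ) ≤ ∑ k ∈ Finset.Icc 1 (r / 2),
      (stirling r k : ℝ) * γ ^ (2 * k) * ψ ^ (r - 2 * k) := by
    apply Finset.sum_nonneg
    intro k hk
    positivity
  have h1 := Real.rpow_le_rpow hsum0 hsum (by positivity : (0:ℝ) ≤ 1 / r)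
  calc (∑ k ∈ Finset.Icc 1 (r / 2), (stirling r k : ℝ) * γ ^ (2 * k) * ψ ^ (r - 2 * k))
        ^ ((1 : ℝ) / r)
      ≤ ((2 * D * M) ^ r) ^ ((1:ℝ)/r) := h1
    _ = 2 * D * M := by
        rw [← Real.rpow_natCast (2 * D * M) r, ← Real.rpow_mul hRHS0, mul_one_div,
          div_self hr0, Real.rpow_one]
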